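/- arXiv:2207.07499 — 7 statements merged into one kernel-verified Lean document; each statement's English description precedes it below -/
import Mathlib

section
/- For every ε > 0 there exists a constant M such that every finite simple graph G with at least one vertex admits an ε-regular partition P of its vertex set with at most M parts (Szemerédi's Regularity Lemma). -/
open Finset
open scoped Classical

/-- The number of ordered pairs `(x, y) ∈ X × Y` joined by an edge of `G`. -/
noncomputable def edgeCount {V : Type*} (G : SimpleGraph V) (X Y : Finset V) : ℕ :=
  ((X ×ˢ Y).filter fun p => G.Adj p.1 p.2).card

/-- The edge density `d(X,Y) = e(X,Y) / (|X| |Y|)`. -/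
noncomputable def density {V : Type*} (G : SimpleGraph V) (X Y : Finset V) : ℝ :=
  (edgeCount G X Y : ℝ) / ((X.card : ℝ) * (Y.card : ℝ))

/-- `(X, Y)` is an `ε`-regular pair in `G`. -/
def IsRegularPair {V : Type*} (G : SimpleGraph V) (X Y : Finset V) (ε : ℝ) : Prop :=
  ∀ A ⊆ X, ∀ B ⊆ Y, ε * X.card ≤ A.card → ε * Y.card ≤ B.card →
    |density G A B - density G X Y| ≤ ε

lemma density_eq_edgeDensity {V : Type*} [DecidableEq V] (G : SimpleGraph V)
    [DecidableRel G.Adj] (X Y : Finset V) :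
    density G X Y = (G.edgeDensity X Y : ℝ) := by
  have hcount : edgeCount G X Y = (Rel.interedges G.Adj X Y).card := by
    rw [edgeCount]
    congr 1
    ext p
    simp only [Finset.mem_filter, Rel.mem_interedges_iff, Finset.mem_product, and_assoc]
  rw [density, hcount, SimpleGraph.edgeDensity, Rel.edgeDensity]
  push_cast
  ring

lemma isUniform_imp_regular {V : Type*} [DecidableEq V] (G : SimpleGraph V)
    [DecidableRel G.Adj] (X Y : Finset V) {ε ε' : ℝ} (hε' : 0 < ε') (h : ε' ≤ ε)
    (hu : G.IsUniform ε' X Y) : IsRegularPair G X Y ε := by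
  intro A hA B hB hAc hBc
  rw [density_eq_edgeDensity, density_eq_edgeDensity]
  refine le_trans (le_of_lt (hu hA hB ?_ ?_)) h
  · calc (X.card : ℝ) * ε' = ε' * X.card := by ring
    _ ≤ ε * X.card := by have : (0:ℝ) ≤ X.card := Nat.cast_nonneg _; nlinarith
    _ ≤ A.card := hAc
  · calc (Y.card : ℝ) * ε' = ε' * Y.card := by ring
    _ ≤ ε * Y.card := by have : (0:ℝ) ≤ Y.card := Nat.cast_nonneg _; nlinarith
    _ ≤ B.card := hBc

lemma singleton_regular {V : Type*} (G : SimpleGraph V) (x y : V) {ε : ℝ} (hε : 0 < ε) :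
    IsRegularPair G {x} {y} ε := by
  intro A hA B hB hAc hBc
  have hA1 : A = {x} := by
    have hne : A.Nonempty := by
      rw [← Finset.card_pos]
      by_contra h
      push_neg at h
      have h0 : A.card = 0 := Nat.le_zero.mp h
      rw [h0] at hAc
      simp only [Nat.cast_zero, Finset.card_singleton, Nat.cast_one, mul_one] at hAc
      linarith
    obtain ⟨a, ha⟩ := hne
    have := hA ha
    simp only [Finset.mem_singleton] at this
    subst this
    exact Finset.Subset.antisymm hA (Finset.singleton_subset_iff.mpr ha)
  have hB1 : B = {y} := by
    have hne : B.Nonempty := by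
      rw [← Finset.card_pos]
      by_contra h
      push_neg at h
      have h0 : B.card = 0 := Nat.le_zero.mp h
      rw [h0] at hBc
      simp only [Nat.cast_zero, Finset.card_singleton, Nat.cast_one, mul_one] at hBc
      linarith
    obtain ⟨b, hb⟩ := hne
    have := hB hb
    simp only [Finset.mem_singleton] at this
    subst this
    exact Finset.Subset.antisymm hB (Finset.singleton_subset_iff.mpr hb)
  rw [hA1, hB1]
  simp [abs_of_nonneg]
  linarith

set_option maxHeartbeats 1600000 in
/-- Szemerédi's Regularity Lemma. -/
theorem szemeredi_regularity_lemma (ε : ℝ) (hε : 0 < ε) :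
    ∃ M : ℕ, ∀ (V : Type) [Fintype V] (G : SimpleGraph V), 0 < Fintype.card V →
      ∃ P : Finpartition (univ : Finset V),
        (∑ R ∈ P.parts, ∑ S ∈ P.parts,
            if ¬ IsRegularPair G R S ε then ((R.card : ℝ) * (S.card : ℝ)) else 0)
          ≤ ε * ((Fintype.card V : ℝ)) ^ 2
        ∧ P.parts.card ≤ M := by
  set ε' : ℝ := ε / 8 with hε'def
  have hε' : 0 < ε' := by positivity
  set l : ℕ := ⌈(8:ℝ)/ε⌉₊ + 1 with hl
  have hlpos : 0 < l := Nat.succ_pos _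
  have hl8 : (8:ℝ)/ε ≤ l := by
    calc (8:ℝ)/ε ≤ ⌈(8:ℝ)/ε⌉₊ := Nat.le_ceil _
    _ ≤ l := by exact_mod_cast Nat.le_succ _
  refine ⟨max l (SzemerediRegularity.bound ε' l), ?_⟩
  intro V _ G hV
  classical
  by_cases hcard : l ≤ Fintype.card V
  · obtain ⟨P, hPequi, hPl, hPcard, hPunif⟩ := szemeredi_regularity G hε' hcard
    refine ⟨P, ?_, le_max_of_le_right hPcard⟩
    set n : ℝ := (Fintype.card V : ℝ) with hn
    set k : ℕ := P.parts.card with hk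
    have hkpos : 0 < k := lt_of_lt_of_le hlpos hPl
    have hkn : (k : ℝ) ≤ n := by
      have := P.card_parts_le_card
      rw [Finset.card_univ] at this
      rw [hn, hk]
      exact_mod_cast this
    have hnpos : (0:ℝ) < n := by rw [hn]; exact_mod_cast hV
    have hkR : (0:ℝ) < k := by exact_mod_cast hkpos
    set m : ℝ := n / k + 1 with hm
    have hpart_le : ∀ R ∈ P.parts, (R.card : ℝ) ≤ m := by
      intro R hR
      have h1 := hPequi.card_part_le_average_add_one hR
      have h2 : ((Fintype.card V / P.parts.card : ℕ) : ℝ) ≤ n / k := by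
        rw [hn, hk]
        exact Nat.cast_div_le
      calc (R.card : ℝ) ≤ ((Fintype.card V / P.parts.card + 1 : ℕ) : ℝ) := by exact_mod_cast h1
      _ = ((Fintype.card V / P.parts.card : ℕ) : ℝ) + 1 := by push_cast; ring
      _ ≤ m := by rw [hm]; linarith
    have hm2 : m ≤ 2 * n / k := by
      rw [hm]
      rw [div_add' _ _ _ (ne_of_gt hkR)]
      rw [div_le_div_iff₀ hkR hkR]
      nlinarith
    -- bound each term
    have key : ∀ p ∈ P.parts ×ˢ P.parts,
        (if ¬ IsRegularPair G p.1 p.2 ε then ((p.1.card : ℝ) * (p.2.card : ℝ)) else 0)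
        ≤ (if p.1 = p.2 ∨ p ∈ P.nonUniforms G ε' then m^2 else 0) := by
      rintro ⟨R, S⟩ hp
      rw [Finset.mem_product] at hp
      by_cases hreg : IsRegularPair G R S ε
      · simp only [hreg, not_true, if_false]
        split
        · positivity
        · exact le_rfl
      · simp only [hreg, not_false_iff, if_true]
        have hcase : R = S ∨ (R, S) ∈ P.nonUniforms G ε' := by
          by_cases hRS : R = S
          · exact Or.inl hRS
          · refine Or.inr ?_
            rw [Finpartition.mk_mem_nonUniforms]
            refine ⟨hp.1, hp.2, hRS, ?_⟩
            intro hu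
            exact hreg (isUniform_imp_regular G R S hε' (by rw [hε'def]; linarith) hu)
        rw [if_pos hcase]
        have h1 := hpart_le R hp.1
        have h2 := hpart_le S hp.2
        have h3 : (0:ℝ) ≤ (R.card : ℝ) := Nat.cast_nonneg _
        have h4 : (0:ℝ) ≤ (S.card : ℝ) := Nat.cast_nonneg _
        nlinarith
    calc (∑ R ∈ P.parts, ∑ S ∈ P.parts,
            if ¬ IsRegularPair G R S ε then ((R.card : ℝ) * (S.card : ℝ)) else 0)
        = ∑ p ∈ P.parts ×ˢ P.parts,
            (if ¬ IsRegularPair G p.1 p.2 ε then ((p.1.card : ℝ) * (p.2.card : ℝ)) else 0) := by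
          rw [Finset.sum_product]
      _ ≤ ∑ p ∈ P.parts ×ˢ P.parts,
            (if p.1 = p.2 ∨ p ∈ P.nonUniforms G ε' then m^2 else 0) :=
          Finset.sum_le_sum key
      _ = ((P.parts ×ˢ P.parts).filter
            (fun p => p.1 = p.2 ∨ p ∈ P.nonUniforms G ε')).card * m^2 := by
          rw [Finset.sum_ite, Finset.sum_const, Finset.sum_const_zero, add_zero,
            nsmul_eq_mul]
      _ ≤ (P.parts.diag.card + (P.nonUniforms G ε').card : ℝ) * m^2 := by
          have hsub : (P.parts ×ˢ P.parts).filter (fun p => p.1 = p.2 ∨ p ∈ P.nonUniforms G ε')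
              ⊆ P.parts.diag ∪ P.nonUniforms G ε' := by
            intro p hp
            rw [Finset.mem_filter] at hp
            rw [Finset.mem_union]
            rcases hp.2 with h | h
            · left
              rw [Finset.mem_diag]
              have := Finset.mem_product.mp hp.1
              exact ⟨this.1, h⟩
            · right; exact h
          have := Finset.card_le_card hsub
          have h2 := Finset.card_union_le (P.parts.diag) (P.nonUniforms G ε')
          have hmm : (0:ℝ) ≤ m^2 := by positivity
          have : ((P.parts ×ˢ P.parts).filter
              (fun p => p.1 = p.2 ∨ p ∈ P.nonUniforms G ε')).card
              ≤ P.parts.diag.card + (P.nonUniforms G ε').card := le_trans this h2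
          have hcast : (((P.parts ×ˢ P.parts).filter
              (fun p => p.1 = p.2 ∨ p ∈ P.nonUniforms G ε')).card : ℝ)
              ≤ (P.parts.diag.card + (P.nonUniforms G ε').card : ℝ) := by
            exact_mod_cast this
          nlinarith
      _ ≤ ((k : ℝ) + ε' * k^2) * m^2 := by
          have hdiag : P.parts.diag.card = k := by rw [Finset.diag_card, hk]
          have hnu : ((P.nonUniforms G ε').card : ℝ) ≤ ε' * k^2 := by
            have := hPunif
            rw [Finpartition.IsUniform] at this
            calc ((P.nonUniforms G ε').card : ℝ)
                ≤ (P.parts.card * (P.parts.card - 1) : ℕ) * ε' := this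
              _ ≤ (k : ℝ) * k * ε' := by
                  push_cast
                  have : ((P.parts.card - 1 : ℕ) : ℝ) ≤ (k : ℝ) := by
                    rw [hk]
                    exact_mod_cast Nat.sub_le _ _
                  have hkk : (0:ℝ) ≤ (k:ℝ) := le_of_lt hkR
                  exact mul_le_mul_of_nonneg_right
                    (mul_le_mul_of_nonneg_left this hkk) hε'.le
              _ = ε' * k^2 := by ring
          have hmm : (0:ℝ) ≤ m^2 := by positivity
          rw [hdiag]
          nlinarith
      _ ≤ ((k : ℝ) + ε' * k^2) * (2 * n / k)^2 := by
          have hmpos : (0:ℝ) ≤ m := by rw [hm]; positivity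
          have h2 : (0:ℝ) ≤ (k : ℝ) + ε' * k^2 := by positivity
          have hsq : m^2 ≤ (2 * n / k)^2 := pow_le_pow_left₀ hmpos hm2 2
          exact mul_le_mul_of_nonneg_left hsq h2
      _ = 4 * n^2 / k + 4 * ε' * n^2 := by
          field_simp
          ring
      _ ≤ ε * n^2 := by
          have hlk : (l : ℝ) ≤ (k : ℝ) := by exact_mod_cast hPl
          have hlR : (0:ℝ) < l := by exact_mod_cast hlpos
          have h1 : 4 * n^2 / k ≤ 4 * n^2 / l := by
            apply div_le_div_of_nonneg_left (by positivity) hlR hlk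
          have h2 : 4 * n^2 / l ≤ (ε/2) * n^2 := by
            rw [div_le_iff₀ hlR] at *
            have : (8:ℝ)/ε ≤ l := hl8
            rw [div_le_iff₀ hε] at this
            nlinarith
          have h3 : 4 * ε' * n^2 = (ε/2) * n^2 := by rw [hε'def]; ring
          linarith
  · -- small case: singleton partition
    push_neg at hcard
    refine ⟨⊥, ?_, ?_⟩
    · have hzero : (∑ R ∈ (⊥ : Finpartition (univ : Finset V)).parts,
          ∑ S ∈ (⊥ : Finpartition (univ : Finset V)).parts,
            if ¬ IsRegularPair G R S ε then ((R.card : ℝ) * (S.card : ℝ)) else 0) = 0 := by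
        apply Finset.sum_eq_zero
        intro R hR
        apply Finset.sum_eq_zero
        intro S hS
        rw [Finpartition.parts_bot, Finset.mem_map] at hR hS
        obtain ⟨x, _, rfl⟩ := hR
        obtain ⟨y, _, rfl⟩ := hS
        simp only [Function.Embedding.coeFn_mk]
        rw [if_neg]
        simp only [not_not]
        exact singleton_regular G x y hε
      rw [hzero]
      positivity
    · rw [Finpartition.card_bot, Finset.card_univ]
      exact le_max_of_le_left (le_of_lt hcard)
end

section
/- Every set A of natural numbers with positive upper asymptotic density contains a 3-term arithmetic progression, i.e. there exist k and d > 0 with {k, k+d, k+2d} ⊆ A (Roth's Theorem on Arithmetic Progressions). -/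
/-- The upper asymptotic density of a set of natural numbers:
`limsup_{N → ∞} |A ∩ [1, N]| / N`. -/
noncomputable def upperDensity (A : Set ℕ) : ℝ :=
  Filter.limsup (fun N : ℕ => ((A ∩ Set.Icc 1 N).ncard : ℝ) / (N : ℝ)) Filter.atTop

/-- Roth's Theorem on Arithmetic Progressions: every set of naturals with positive
upper asymptotic density contains a 3-term arithmetic progression. -/
theorem roth_arithmetic_progressions (A : Set ℕ) (h : 0 < upperDensity A) :
    ∃ k d : ℕ, 0 < d ∧ {k, k + d, k + 2 * d} ⊆ A := by
  set f : ℕ → ℝ := fun N => ((A ∩ Set.Icc 1 N).ncard : ℝ) / (N : ℝ) with hf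
  have hfin : ∀ N : ℕ, (A ∩ Set.Icc 1 N).Finite :=
    fun N => (Set.finite_Icc 1 N).subset Set.inter_subset_right
  set ε : ℝ := upperDensity A / 2 with hε
  have hεpos : 0 < ε := by positivity
  have hfreq : ∃ᶠ N in Filter.atTop, ε < f N := by
    apply Filter.frequently_lt_of_lt_limsup
    · exact Filter.isCoboundedUnder_le_of_le Filter.atTop
        (x := 0) (fun N => by positivity)
    · rw [hε]; change upperDensity A / 2 < upperDensity A; linarith
  set M : ℕ := max (cornersTheoremBound (ε / 2 / 3)) 1 with hM
  obtain ⟨N, hNM, hN⟩ := (Filter.frequently_atTop.mp hfreq) M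
  have hN1 : 1 ≤ N := le_trans (le_max_right _ _) hNM
  have hNpos : (0 : ℝ) < N := by exact_mod_cast hN1
  -- the finset
  set S : Finset ℕ := (hfin N).toFinset with hS
  have hNR : (1 : ℝ) ≤ N := by exact_mod_cast hN1
  have hcard : ε * N ≤ (S.card : ℝ) := by
    rw [hS, ← Set.ncard_eq_toFinset_card _ (hfin N)]
    have h2 := (le_div_iff₀ hNpos).mp hN.le
    linarith
  have hsub : S ⊆ Finset.range (N + 1) := by
    intro x hx
    rw [hS, Set.Finite.mem_toFinset] at hx
    obtain ⟨-, h1, h2⟩ := hx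
    simp only [Finset.mem_range]
    omega
  have hcard2 : (ε / 2) * ((N + 1 : ℕ) : ℝ) ≤ (S.card : ℝ) := by
    push_cast
    nlinarith
  have hbound : cornersTheoremBound (ε / 2 / 3) ≤ N + 1 := by
    have := le_max_left (cornersTheoremBound (ε / 2 / 3)) 1
    omega
  have hnot := roth_3ap_theorem_nat (ε / 2) (by positivity) hbound S hsub hcard2
  rw [ThreeAPFree] at hnot
  push_neg at hnot
  obtain ⟨a, ha, b, hb, c, hc, habc, hab⟩ := hnot
  have hmem : ∀ x, x ∈ S → x ∈ A := by
    intro x hx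
    rw [hS, Set.Finite.mem_toFinset] at hx
    exact hx.1
  have haA := hmem a ha
  have hbA := hmem b hb
  have hcA := hmem c hc
  rcases lt_or_gt_of_ne hab with hlt | hgt
  · refine ⟨a, b - a, by omega, ?_⟩
    intro x hx
    simp only [Set.mem_insert_iff, Set.mem_singleton_iff] at hx
    rcases hx with rfl | rfl | rfl
    · exact haA
    · have : a + (b - a) = b := by omega
      rw [this]; exact hbA
    · have : a + 2 * (b - a) = c := by omega
      rw [this]; exact hcA
  · refine ⟨c, b - c, by omega, ?_⟩
    intro x hx
    simp only [Set.mem_insert_iff, Set.mem_singleton_iff] at hx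
    rcases hx with rfl | rfl | rfl
    · exact hcA
    · have : c + (b - c) = b := by omega
      rw [this]; exact hbA
    · have : c + 2 * (b - c) = a := by omega
      rw [this]; exact haA
end

section
/- For every ε > 0 there exists M ∈ ℕ such that for all N ≥ M and all A ⊆ {0, 1, …, N−1}: if A contains no 3-term arithmetic progression (i.e. there are no k and d > 0 with {k, k+d, k+2d} ⊆ A), then |A| < ε·N (quantitative form of Roth's Theorem). -/
/-- Quantitative form of Roth's Theorem: for every `ε > 0` there is `M` such that
for all `N ≥ M`, any subset of `{0, …, N-1}` free of 3-term arithmetic progressions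
has fewer than `ε * N` elements. -/
theorem roth_quantitative (ε : ℝ) (hε : 0 < ε) :
    ∃ M : ℕ, ∀ N : ℕ, M ≤ N → ∀ A ⊆ Finset.range N,
      (¬ ∃ k d : ℕ, 0 < d ∧ ({k, k + d, k + 2 * d} : Finset ℕ) ⊆ A) →
      (A.card : ℝ) < ε * (N : ℝ) := by
  have h := rothNumberNat_isLittleO_id
  rw [Asymptotics.isLittleO_iff] at h
  have h2 := (h (c := ε / 2) (by positivity)).exists_forall_of_atTop
  obtain ⟨M₀, hM₀⟩ := h2
  refine ⟨max M₀ 1, fun N hN A hA hfree ↦ ?_⟩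
  have h1 : (1 : ℕ) ≤ N := le_trans (le_max_right _ _) hN
  have hAP : ThreeAPFree (A : Set ℕ) := by
    intro a ha b hb c hc habc
    by_contra hab
    rcases lt_or_gt_of_ne hab with hlt | hgt
    · exact hfree ⟨a, b - a, by omega, by
        intro x hx; simp only [Finset.mem_insert, Finset.mem_singleton] at hx
        rcases hx with rfl | rfl | rfl
        · exact ha
        · simpa [Nat.add_sub_cancel' hlt.le] using hb
        · have : a + 2 * (b - a) = c := by omega
          simpa [this] using hc⟩
    · refine hfree ⟨c, b - c, by omega, ?_⟩
      intro x hx; simp only [Finset.mem_insert, Finset.mem_singleton] at hx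
      rcases hx with rfl | rfl | rfl
      · exact hc
      · have : c + (b - c) = b := by omega
        simpa [this] using hb
      · have : c + 2 * (b - c) = a := by omega
        simpa [this] using ha
  have hcard : A.card ≤ rothNumberNat N :=
    hAP.le_rothNumberNat A (fun x hx ↦ Finset.mem_range.mp (hA hx)) rfl
  have hb := hM₀ N (le_trans (le_max_left _ _) hN)
  simp only [RCLike.norm_natCast] at hb
  have : (A.card : ℝ) ≤ ε / 2 * N := le_trans (by exact_mod_cast hcard) hb
  have hN' : (1 : ℝ) ≤ N := by exact_mod_cast h1
  nlinarith
end

section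
/- Triangle Counting Lemma: Let G be a finite simple graph and X, Y, Z ⊆ V(G) such that the pairs (X,Y), (Y,Z), (X,Z) are all ε-regular for some ε > 0, and d(X,Y) ≥ 2ε, d(X,Z) ≥ 2ε, d(Y,Z) ≥ 2ε. Then the number of triples (x,y,z) ∈ X×Y×Z such that x, y, z form a triangle in G is at least (1 − 2ε)(d(X,Y) − ε)(d(X,Z) − ε)(d(Y,Z) − ε)·|X|·|Y|·|Z|. -/
open Finset
open scoped Classical

lemma edgeCount_eq_sum {V : Type*} (G : SimpleGraph V) (A B : Finset V) :
    edgeCount G A B = ∑ x ∈ A, (B.filter fun y => G.Adj x y).card := by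
  rw [edgeCount, card_filter, sum_product]
  exact sum_congr rfl fun x _ => (card_filter _ _).symm

lemma edgeCount_le {V : Type*} (G : SimpleGraph V) (A B : Finset V) :
    edgeCount G A B ≤ A.card * B.card := by
  calc edgeCount G A B ≤ (A ×ˢ B).card := card_filter_le _ _
  _ = A.card * B.card := card_product _ _

lemma density_nonneg {V : Type*} (G : SimpleGraph V) (A B : Finset V) :
    0 ≤ density G A B := by
  unfold density; positivity

lemma density_le_one {V : Type*} (G : SimpleGraph V) (A B : Finset V) :
    density G A B ≤ 1 := by
  unfold density
  apply div_le_one_of_le₀ _ (by positivity)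
  push_cast
  exact_mod_cast edgeCount_le G A B

lemma edgeCount_cast {V : Type*} (G : SimpleGraph V) (A B : Finset V)
    (hA : (0:ℝ) < A.card) (hB : (0:ℝ) < B.card) :
    (edgeCount G A B : ℝ) = density G A B * A.card * B.card := by
  unfold density
  field_simp

lemma card_pos_of_density {V : Type*} (G : SimpleGraph V) (A B : Finset V) {ε : ℝ}
    (hε : 0 < ε) (h : 2 * ε ≤ density G A B) :
    (0:ℝ) < A.card ∧ (0:ℝ) < B.card := by
  have h' : 0 < density G A B := by linarith
  constructor
  · by_contra hc
    push_neg at hc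
    have hz : (A.card : ℝ) = 0 := le_antisymm hc (by positivity)
    rw [density, hz, zero_mul, div_zero] at h'
    exact lt_irrefl _ h'
  · by_contra hc
    push_neg at hc
    have hz : (B.card : ℝ) = 0 := le_antisymm hc (by positivity)
    rw [density, hz, mul_zero, div_zero] at h'
    exact lt_irrefl _ h'

/-- The set of vertices of `X` with too few neighbours in `Y` is small. -/
lemma bad_card {V : Type*} (G : SimpleGraph V) (X Y : Finset V) {ε : ℝ} (hε : 0 < ε)
    (hXc : (0:ℝ) < X.card) (hYc : (0:ℝ) < Y.card) (hε1 : ε ≤ 1)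
    (hreg : IsRegularPair G X Y ε) (hd : 2 * ε ≤ density G X Y) :
    (((X.filter fun x => ((Y.filter fun y => G.Adj x y).card : ℝ)
        < (density G X Y - ε) * Y.card)).card : ℝ) ≤ ε * X.card := by
  by_contra h
  push_neg at h
  set B := X.filter fun x => ((Y.filter fun y => G.Adj x y).card : ℝ)
      < (density G X Y - ε) * Y.card with hB
  have hBc : (0:ℝ) < B.card := lt_trans (by positivity) h
  have hBne : B.Nonempty := by
    rw [← card_pos]; exact_mod_cast hBc
  have hreg' := hreg B (filter_subset _ _) Y Subset.rfl h.le
    (by nlinarith)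
  have hlow : density G X Y - ε ≤ density G B Y := by
    rw [abs_le] at hreg'; linarith
  have hsum : (edgeCount G B Y : ℝ) < B.card * ((density G X Y - ε) * Y.card) := by
    rw [edgeCount_eq_sum]
    push_cast
    calc ∑ x ∈ B, ((Y.filter fun y => G.Adj x y).card : ℝ)
        < ∑ _x ∈ B, (density G X Y - ε) * Y.card :=
          sum_lt_sum_of_nonempty hBne (fun x hx => (mem_filter.1 hx).2)
      _ = B.card * ((density G X Y - ε) * Y.card) := by
          rw [sum_const, nsmul_eq_mul]
  have : density G B Y < density G X Y - ε := by
    rw [density, div_lt_iff₀ (by positivity)]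
    nlinarith
  linarith

set_option maxHeartbeats 1600000 in
/-- The Triangle Counting Lemma. -/
theorem triangle_counting_lemma {V : Type*} [Fintype V] (G : SimpleGraph V)
    (X Y Z : Finset V) (ε : ℝ) (hε : 0 < ε)
    (hXY : IsRegularPair G X Y ε) (hYZ : IsRegularPair G Y Z ε)
    (hXZ : IsRegularPair G X Z ε)
    (dXY : 2 * ε ≤ density G X Y) (dXZ : 2 * ε ≤ density G X Z)
    (dYZ : 2 * ε ≤ density G Y Z) :
    (1 - 2 * ε) * (density G X Y - ε) * (density G X Z - ε) * (density G Y Z - ε)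
        * (X.card : ℝ) * (Y.card : ℝ) * (Z.card : ℝ)
      ≤ (((X ×ˢ Y ×ˢ Z).filter fun t =>
          G.Adj t.1 t.2.1 ∧ G.Adj t.2.1 t.2.2 ∧ G.Adj t.1 t.2.2).card : ℝ) := by
  obtain ⟨hXc, hYc⟩ := card_pos_of_density G X Y hε dXY
  obtain ⟨-, hZc⟩ := card_pos_of_density G X Z hε dXZ
  have hd1 : density G X Y ≤ 1 := density_le_one G X Y
  have hd2 : density G X Z ≤ 1 := density_le_one G X Z
  have hd3 : density G Y Z ≤ 1 := density_le_one G Y Z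
  have hε1 : ε ≤ 1 := by linarith
  -- bad vertices
  set B1 := X.filter fun x => ((Y.filter fun y => G.Adj x y).card : ℝ)
      < (density G X Y - ε) * Y.card with hB1
  set B2 := X.filter fun x => ((Z.filter fun z => G.Adj x z).card : ℝ)
      < (density G X Z - ε) * Z.card with hB2
  have hB1c : ((B1.card : ℝ)) ≤ ε * X.card := bad_card G X Y hε hXc hYc hε1 hXY dXY
  have hB2c : ((B2.card : ℝ)) ≤ ε * X.card := bad_card G X Z hε hXc hZc hε1 hXZ dXZ
  set X' := X \ (B1 ∪ B2) with hX'
  have hX'card : (1 - 2 * ε) * X.card ≤ (X'.card : ℝ) := by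
    have hsub : B1 ∪ B2 ⊆ X := union_subset (filter_subset _ _) (filter_subset _ _)
    rw [hX', card_sdiff_of_subset hsub, Nat.cast_sub (card_le_card hsub)]
    have := card_union_le B1 B2
    have hcast : ((B1 ∪ B2).card : ℝ) ≤ (B1.card : ℝ) + B2.card := by exact_mod_cast this
    nlinarith
  set c := (density G X Y - ε) * ((density G X Z - ε) * ((density G Y Z - ε)
      * ((Y.card : ℝ) * (Z.card : ℝ)))) with hc
  have hcnn : 0 ≤ c := by
    have : 0 ≤ density G X Y - ε := by linarith
    have : 0 ≤ density G X Z - ε := by linarith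
    have : 0 ≤ density G Y Z - ε := by linarith
    rw [hc]; positivity
  -- per good vertex bound
  have key : ∀ x ∈ X', c ≤
      (((Y ×ˢ Z).filter fun q => G.Adj x q.1 ∧ G.Adj q.1 q.2 ∧ G.Adj x q.2).card : ℝ) := by
    intro x hx
    rw [hX', mem_sdiff, mem_union, hB1, hB2] at hx
    obtain ⟨hxX, hxb⟩ := hx
    push_neg at hxb
    rw [mem_filter, mem_filter] at hxb
    have h1 : (density G X Y - ε) * Y.card ≤ ((Y.filter fun y => G.Adj x y).card : ℝ) := by
      rcases hxb with ⟨h, -⟩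
      by_contra hcon; push_neg at hcon; exact absurd ⟨hxX, hcon⟩ h
    have h2 : (density G X Z - ε) * Z.card ≤ ((Z.filter fun z => G.Adj x z).card : ℝ) := by
      rcases hxb with ⟨-, h⟩
      by_contra hcon; push_neg at hcon; exact absurd ⟨hxX, hcon⟩ h
    set T := Y.filter fun y => G.Adj x y with hT
    set U := Z.filter fun z => G.Adj x z with hU
    have hTc : ε * Y.card ≤ (T.card : ℝ) := le_trans (by nlinarith) h1
    have hUc : ε * Z.card ≤ (U.card : ℝ) := le_trans (by nlinarith) h2
    have hTpos : (0:ℝ) < T.card := lt_of_lt_of_le (by positivity) hTc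
    have hUpos : (0:ℝ) < U.card := lt_of_lt_of_le (by positivity) hUc
    have hreg := hYZ T (filter_subset _ _) U (filter_subset _ _) hTc hUc
    have hdT : density G Y Z - ε ≤ density G T U := by
      rw [abs_le] at hreg; linarith
    have hfib : ((Y ×ˢ Z).filter fun q => G.Adj x q.1 ∧ G.Adj q.1 q.2 ∧ G.Adj x q.2)
        = (T ×ˢ U).filter fun p => G.Adj p.1 p.2 := by
      ext ⟨y, z⟩
      simp only [mem_filter, mem_product, hT, hU]
      tauto
    rw [hfib]
    have hec : (edgeCount G T U : ℝ) = density G T U * T.card * U.card :=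
      edgeCount_cast G T U hTpos hUpos
    have : c ≤ (edgeCount G T U : ℝ) := by
      rw [hec]
      have hd3e : 0 ≤ density G Y Z - ε := by linarith
      calc c = (density G Y Z - ε) * ((density G X Y - ε) * Y.card)
            * ((density G X Z - ε) * Z.card) := by rw [hc]; ring
        _ ≤ density G T U * T.card * U.card := by
            have e1 : (density G Y Z - ε) * ((density G X Y - ε) * Y.card)
                ≤ density G T U * T.card :=
              mul_le_mul (by linarith) h1 (by nlinarith) (by linarith)
            exact mul_le_mul e1 h2 (by nlinarith)
              (mul_nonneg (by linarith) (by positivity))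
    exact le_trans this (le_of_eq (by rw [edgeCount]))
  -- decompose total count over fibers
  have hdecomp : (((X ×ˢ Y ×ˢ Z).filter fun t =>
      G.Adj t.1 t.2.1 ∧ G.Adj t.2.1 t.2.2 ∧ G.Adj t.1 t.2.2).card)
      = ∑ x ∈ X, (((Y ×ˢ Z).filter fun q =>
          G.Adj x q.1 ∧ G.Adj q.1 q.2 ∧ G.Adj x q.2).card) := by
    rw [card_filter, sum_product]
    exact sum_congr rfl fun x _ => (card_filter _ _).symm
  rw [hdecomp]
  push_cast
  have hsub' : X' ⊆ X := sdiff_subset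
  calc (1 - 2 * ε) * (density G X Y - ε) * (density G X Z - ε) * (density G Y Z - ε)
        * (X.card : ℝ) * (Y.card : ℝ) * (Z.card : ℝ)
      = ((1 - 2 * ε) * X.card) * c := by rw [hc]; ring
    _ ≤ (X'.card : ℝ) * c := mul_le_mul_of_nonneg_right hX'card hcnn
    _ = ∑ _x ∈ X', c := by rw [sum_const, nsmul_eq_mul]
    _ ≤ ∑ x ∈ X', (((Y ×ˢ Z).filter fun q =>
          G.Adj x q.1 ∧ G.Adj q.1 q.2 ∧ G.Adj x q.2).card : ℝ) := sum_le_sum key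
    _ ≤ ∑ x ∈ X, (((Y ×ˢ Z).filter fun q =>
          G.Adj x q.1 ∧ G.Adj q.1 q.2 ∧ G.Adj x q.2).card : ℝ) :=
        sum_le_sum_of_subset_of_nonneg hsub' (fun _ _ _ => by positivity)
end

section
/- Triangle Removal Lemma: For every ε > 0 there exists δ > 0 such that every finite simple graph G on N ≥ 1 vertices containing at most δ·N³ triangles can be made triangle-free by removing at most ε·N² edges; that is, there is a graph G' with the same vertex set, edge set contained in that of G, containing no triangle, and with |E(G) \ E(G')| ≤ ε·N². -/
open Finset
open scoped Classical

/-- The set of 3-element vertex sets of `G` that form a triangle. -/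
noncomputable def triangleFinset {V : Type*} [Fintype V] (G : SimpleGraph V) :
    Finset (Finset V) :=
  Finset.univ.filter fun T =>
    ∃ x y z : V, T = {x, y, z} ∧ G.Adj x y ∧ G.Adj y z ∧ G.Adj x z

/-!
The regularity lemma splits the vertices into boundedly many parts with almost all pairs
ε-regular; deleting the edges inside parts, between irregular pairs and between sparse pairs
costs few edges, and any triangle that survives lies across three dense regular pairs, which by
the counting lemma carry a positive proportion of all triples. Mathlib carries this out as
`SimpleGraph.FarFromTriangleFree.le_card_cliqueFinset`, with explicit constant
`triangleRemovalBound ε`; halving that constant absorbs the strictness of its contrapositive.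
-/

namespace SimpleGraph

variable {V : Type*} [Fintype V]

theorem triangleFinset_eq_cliqueFinset (G : SimpleGraph V) :
    triangleFinset G = G.cliqueFinset 3 := by
  ext T
  simp only [triangleFinset, mem_cliqueFinset_iff, mem_filter, mem_univ, true_and,
    is3Clique_iff]
  constructor
  · rintro ⟨x, y, z, rfl, hxy, hyz, hxz⟩
    exact ⟨x, y, z, hxy, hxz, hyz, rfl⟩
  · rintro ⟨x, y, z, hxy, hxz, hyz, rfl⟩
    exact ⟨x, y, z, rfl, hxy, hyz, hxz⟩

theorem triangleFinset_eq_empty_iff {G : SimpleGraph V} :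
    triangleFinset G = ∅ ↔ G.CliqueFree 3 := by
  rw [triangleFinset_eq_cliqueFinset, cliqueFinset_eq_empty_iff]

theorem ncard_edgeSet_sdiff_deleteEdges (G : SimpleGraph V) {s : Finset (Sym2 V)}
    (hs : s ⊆ G.edgeFinset) : (G.edgeSet \ (G.deleteEdges ↑s).edgeSet).ncard = #s := by
  have hs' : (s : Set (Sym2 V)) ⊆ G.edgeSet := by rw [← coe_edgeFinset]; exact_mod_cast hs
  rw [edgeSet_deleteEdges, Set.sdiff_sdiff_cancel_left hs', Set.ncard_coe_finset]

theorem exists_le_triangleFinset_eq_empty_of_card_lt {G : SimpleGraph V} {ε : ℝ}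
    (hG : (#(triangleFinset G) : ℝ) < triangleRemovalBound ε * Fintype.card V ^ 3) :
    ∃ G' ≤ G, triangleFinset G' = ∅ ∧
      ((G.edgeSet \ G'.edgeSet).ncard : ℝ) < ε * Fintype.card V ^ 2 := by
  have hnear : ¬ G.FarFromTriangleFree ε := fun hfar ↦
    hG.not_ge (triangleFinset_eq_cliqueFinset G ▸ hfar.le_card_cliqueFinset)
  simp only [FarFromTriangleFree, DeleteFar, not_forall, not_le, exists_prop] at hnear
  obtain ⟨s, hs, hfree, hcard⟩ := hnear
  refine ⟨G.deleteEdges ↑s, deleteEdges_le _, triangleFinset_eq_empty_iff.2 hfree, ?_⟩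
  rw [ncard_edgeSet_sdiff_deleteEdges G hs]
  exact_mod_cast hcard

end SimpleGraph

open SimpleGraph in
/-- The Triangle Removal Lemma. -/
theorem triangle_removal_lemma (ε : ℝ) (hε : 0 < ε) :
    ∃ δ : ℝ, 0 < δ ∧ ∀ (V : Type) [Fintype V] (G : SimpleGraph V),
      1 ≤ Fintype.card V →
      ((triangleFinset G).card : ℝ) ≤ δ * (Fintype.card V : ℝ) ^ 3 →
      ∃ G' : SimpleGraph V, G' ≤ G ∧ triangleFinset G' = ∅ ∧
        ((G.edgeSet \ G'.edgeSet).ncard : ℝ) ≤ ε * (Fintype.card V : ℝ) ^ 2 := by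
  have hbound : 0 < triangleRemovalBound ε := triangleRemovalBound_pos hε
  refine ⟨triangleRemovalBound ε / 2, by positivity, fun V _ G hV hcount ↦ ?_⟩
  have hcube : (0 : ℝ) < Fintype.card V ^ 3 := by
    have : (0 : ℝ) < Fintype.card V := by exact_mod_cast hV
    positivity
  obtain ⟨G', hle, hfree, hcard⟩ :=
    exists_le_triangleFinset_eq_empty_of_card_lt (ε := ε) (hcount.trans_lt (by gcongr; linarith))
  exact ⟨G', hle, hfree, hcard.le⟩
end

section
/- Diamond-Free Lemma (Ruzsa–Szemerédi bound): For every ε > 0 there exists N > 0 such that for every finite simple graph G with more than N vertices in which every edge lies in exactly one triangle, one has |E(G)| ≤ ε·|V(G)|². -/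
open Finset
open scoped Classical

/-- Every edge of `G` lies in exactly one triangle. -/
def UniqueTriangles {V : Type*} (G : SimpleGraph V) : Prop :=
  ∀ u v : V, G.Adj u v → ∃! T : Set V,
    (∃ x y z : V, T = {x, y, z} ∧ G.Adj x y ∧ G.Adj y z ∧ G.Adj x z) ∧
    ({u, v} : Set V) ⊆ T

/-!
When every edge lies in exactly one triangle, `|E| = 3 · #triangles`, so it suffices to show
that there are fewer than `(ε / 3) n²` triangles. If there were more, then, the triangles being
edge-disjoint, `G` would be `(ε / 3)`-far from triangle-free, and the triangle removal lemma would
give `δ n³` triangles for some `δ > 0` depending only on `ε`. But edge-disjointness also bounds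
the number of triangles by `n²`, which is absurd once `n > δ⁻¹`.
-/

namespace SimpleGraph

variable {V : Type*} {G : SimpleGraph V}

lemma exists_eq_triple_of_mem_cliqueSet_three {s : Finset V} (hs : s ∈ G.cliqueSet 3) :
    ∃ x y z : V, (s : Set V) = {x, y, z} ∧ G.Adj x y ∧ G.Adj y z ∧ G.Adj x z := by
  obtain ⟨a, b, c, hab, hac, hbc, rfl⟩ := is3Clique_iff.1 (mem_cliqueSet_iff.1 hs)
  exact ⟨a, b, c, by simp, hab, hbc, hac⟩

lemma _root_.UniqueTriangles.locallyLinear (h : UniqueTriangles G) : G.LocallyLinear := by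
  refine ⟨?_, fun x y hxy ↦ ?_⟩
  · rintro s hs t ht hst u ⟨hus, hut⟩ v ⟨hvs, hvt⟩
    by_contra huv
    obtain ⟨T, -, hT⟩ := h u v ((mem_cliqueSet_iff.1 hs).1 hus hvs huv)
    have hsT : (s : Set V) = T := hT _ ⟨exists_eq_triple_of_mem_cliqueSet_three hs,
      Set.pair_subset hus hvs⟩
    have htT : (t : Set V) = T := hT _ ⟨exists_eq_triple_of_mem_cliqueSet_three ht,
      Set.pair_subset hut hvt⟩
    exact hst (coe_injective (hsT.trans htT.symm))
  · obtain ⟨_, ⟨⟨a, b, c, rfl, hab, hbc, hac⟩, hxyT⟩, -⟩ := h x y hxy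
    refine ⟨{a, b, c}, is3Clique_triple_iff.2 ⟨hab, hac, hbc⟩, ?_, ?_⟩
    · simpa using hxyT (Set.mem_insert x {y})
    · simpa using hxyT (Set.mem_insert_of_mem x rfl)

variable [Fintype V] [DecidableEq V] [DecidableRel G.Adj]

lemma EdgeDisjointTriangles.card_cliqueFinset_le_sq (hG : G.EdgeDisjointTriangles) :
    #(G.cliqueFinset 3) ≤ Fintype.card V ^ 2 :=
  calc #(G.cliqueFinset 3)
      ≤ 3 * #(G.cliqueFinset 3) := Nat.le_mul_of_pos_left _ three_pos
    _ ≤ #G.edgeFinset := hG.card_edgeFinset_le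
    _ ≤ (Fintype.card V).choose 2 := card_edgeFinset_le_card_choose_two
    _ ≤ Fintype.card V ^ 2 := Nat.choose_le_pow _ _

lemma EdgeDisjointTriangles.card_cliqueFinset_lt (hG : G.EdgeDisjointTriangles) {ε : ℝ}
    (hε : 0 < ε) (hV : (triangleRemovalBound ε)⁻¹ < Fintype.card V) :
    #(G.cliqueFinset 3) < ε * Fintype.card V ^ 2 := by
  by_contra! hmany
  have hδ : 0 < triangleRemovalBound ε := triangleRemovalBound_pos hε
  have hδn : 1 < triangleRemovalBound ε * Fintype.card V := by
    rwa [inv_lt_iff_one_lt_mul₀ hδ, mul_comm] at hV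
  have hfar : G.FarFromTriangleFree ε := hG.farFromTriangleFree (by simpa using hmany)
  have hcube_le_sq : triangleRemovalBound ε * Fintype.card V ^ 3 ≤ (Fintype.card V : ℝ) ^ 2 :=
    hfar.le_card_cliqueFinset.trans (mod_cast hG.card_cliqueFinset_le_sq)
  have hV_pos : (0 : ℝ) < Fintype.card V := (inv_pos.2 hδ).trans hV
  have hsq_lt_cube : (Fintype.card V : ℝ) ^ 2 < triangleRemovalBound ε * Fintype.card V ^ 3 :=
    calc (Fintype.card V : ℝ) ^ 2
        = 1 * Fintype.card V ^ 2 := (one_mul _).symm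
      _ < triangleRemovalBound ε * Fintype.card V * Fintype.card V ^ 2 :=
        mul_lt_mul_of_pos_right hδn (pow_pos hV_pos 2)
      _ = triangleRemovalBound ε * Fintype.card V ^ 3 := by ring
  exact hcube_le_sq.not_gt hsq_lt_cube

end SimpleGraph

/-- The Diamond-Free Lemma (Ruzsa–Szemerédi bound). -/
theorem diamond_free (ε : ℝ) (hε : 0 < ε) :
    ∃ N : ℕ, 0 < N ∧ ∀ (V : Type) [Fintype V] (G : SimpleGraph V),
      N < Fintype.card V → UniqueTriangles G →
      (G.edgeSet.ncard : ℝ) ≤ ε * (Fintype.card V : ℝ) ^ 2 := by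
  refine ⟨⌈(SimpleGraph.triangleRemovalBound (ε / 3))⁻¹⌉₊ + 1, Nat.succ_pos _,
    fun V _ G hN hG ↦ ?_⟩
  have hV : (SimpleGraph.triangleRemovalBound (ε / 3))⁻¹ < Fintype.card V :=
    (Nat.le_ceil _).trans_lt (mod_cast Nat.lt_of_succ_lt hN)
  have htriangles := hG.locallyLinear.edgeDisjointTriangles.card_cliqueFinset_lt
    (by positivity) hV
  have hedges : (G.edgeSet.ncard : ℝ) = 3 * #(G.cliqueFinset 3) := by
    rw [Set.ncard_eq_toFinset_card', ← SimpleGraph.edgeFinset, hG.locallyLinear.card_edgeFinset]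
    exact_mod_cast rfl
  rw [hedges]
  linarith
end

section
/- Energy Boost Lemma: Let G be a finite simple graph, U, W ⊆ V(G) finite, ε > 0, and suppose U' ⊆ U, W' ⊆ W witness irregularity: |U'| ≥ ε|U|, |W'| ≥ ε|W|, and |d(U',W') − d(U,W)| > ε. Let P₂(X,Y) denote {X, Y\X} if X ⊊ Y and {Y} if X = Y. Then Σ_{A ∈ P₂(U',U)} Σ_{B ∈ P₂(W',W)} q(A,B) ≥ q(U,W) + ε⁴·|U|·|W| / |V(G)|². -/
open Finset
open scoped Classical

/-- The energy `q(U,W) = |U| |W| d(U,W)² / |V(G)|²` of a pair of vertex subsets. -/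
noncomputable def energy {V : Type*} [Fintype V] (G : SimpleGraph V) (U W : Finset V) : ℝ :=
  (U.card : ℝ) * (W.card : ℝ) * (density G U W) ^ 2 / (Fintype.card V : ℝ) ^ 2

/-- `P2 X Y` is the partition `{X, Y \ X}` of `Y` if `X ⊊ Y`, and `{Y}` otherwise. -/
noncomputable def P2 {V : Type*} (X Y : Finset V) : Finset (Finset V) :=
  if X ⊂ Y then {X, Y \ X} else {Y}

lemma edgeCount_empty_left {V : Type*} (G : SimpleGraph V) (Y : Finset V) :
    edgeCount G ∅ Y = 0 := by simp [edgeCount]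

lemma edgeCount_empty_right {V : Type*} (G : SimpleGraph V) (X : Finset V) :
    edgeCount G X ∅ = 0 := by simp [edgeCount]

lemma edgeCount_union_left {V : Type*} (G : SimpleGraph V) (A B Y : Finset V)
    (h : Disjoint A B) :
    edgeCount G (A ∪ B) Y = edgeCount G A Y + edgeCount G B Y := by
  unfold edgeCount
  rw [Finset.union_product, Finset.filter_union, Finset.card_union_of_disjoint]
  exact Finset.disjoint_filter_filter (Finset.disjoint_product.mpr (Or.inl h))

lemma edgeCount_union_right {V : Type*} (G : SimpleGraph V) (X A B : Finset V)
    (h : Disjoint A B) :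
    edgeCount G X (A ∪ B) = edgeCount G X A + edgeCount G X B := by
  unfold edgeCount
  rw [Finset.product_union, Finset.filter_union, Finset.card_union_of_disjoint]
  exact Finset.disjoint_filter_filter (Finset.disjoint_product.mpr (Or.inr h))

lemma card_mul_density {V : Type*} (G : SimpleGraph V) (X Y : Finset V) :
    (X.card : ℝ) * (Y.card : ℝ) * density G X Y = (edgeCount G X Y : ℝ) := by
  rcases eq_or_ne ((X.card : ℝ) * (Y.card : ℝ)) 0 with h | h
  · rw [h, zero_mul]
    rcases mul_eq_zero.mp h with h' | h'
    · have : X = ∅ := Finset.card_eq_zero.mp (Nat.cast_eq_zero.mp h')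
      simp [this, edgeCount_empty_left]
    · have : Y = ∅ := Finset.card_eq_zero.mp (Nat.cast_eq_zero.mp h')
      simp [this, edgeCount_empty_right]
  · rw [density, mul_div_cancel₀ _ h]

lemma energy_empty_left {V : Type*} [Fintype V] (G : SimpleGraph V) (Y : Finset V) :
    energy G ∅ Y = 0 := by simp [energy]

lemma energy_empty_right {V : Type*} [Fintype V] (G : SimpleGraph V) (X : Finset V) :
    energy G X ∅ = 0 := by simp [energy]

lemma P2_sum {V : Type*} (X Y : Finset V) (f : Finset V → ℝ)
    (hXY : X ⊆ Y) (hXne : X.Nonempty) (hf : f ∅ = 0) :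
    ∑ A ∈ P2 X Y, f A = f X + f (Y \ X) := by
  by_cases h : X ⊂ Y
  · have hne : X ≠ Y \ X := by
      intro he
      obtain ⟨x, hx⟩ := hXne
      have := he ▸ hx
      simp [Finset.mem_sdiff] at this
      exact this.2 hx
    rw [P2, if_pos h, Finset.sum_pair hne]
  · have hXY' : X = Y := ((hXY.ssubset_or_eq).resolve_left h)
    subst hXY'
    rw [P2, if_neg h]
    simp [hf]

set_option maxHeartbeats 1000000 in
lemma core (a1 a2 b1 b2 d11 d12 d21 d22 eps E : ℝ)
    (ha1 : 0 < a1) (ha2 : 0 ≤ a2) (hb1 : 0 < b1) (hb2 : 0 ≤ b2) (heps : 0 < eps)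
    (hT : a1*b1*d11 + a1*b2*d12 + a2*b1*d21 + a2*b2*d22 = E)
    (ha : eps * (a1 + a2) ≤ a1) (hb : eps * (b1 + b2) ≤ b1)
    (hd : eps < |d11 - E / ((a1+a2)*(b1+b2))|) :
    E^2/((a1+a2)*(b1+b2)) + eps^4*((a1+a2)*(b1+b2))
      ≤ a1*b1*d11^2 + a1*b2*d12^2 + a2*b1*d21^2 + a2*b2*d22^2 := by
  have hSpos : 0 < (a1+a2)*(b1+b2) := mul_pos (by linarith) (by linarith)
  set S := (a1+a2)*(b1+b2) with hS
  set D := E / S with hD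
  have key : a1*b1*d11^2 + a1*b2*d12^2 + a2*b1*d21^2 + a2*b2*d22^2
      = E^2/S + (a1*b1*(d11-D)^2 + a1*b2*(d12-D)^2 + a2*b1*(d21-D)^2 + a2*b2*(d22-D)^2) := by
    rw [hD, ← hT, hS]
    field_simp
    ring
  have h1 : eps^2 * S ≤ a1 * b1 := by
    have h0 : 0 ≤ eps * (b1 + b2) := by positivity
    nlinarith [mul_le_mul ha hb h0 ha1.le]
  have h2 : eps^2 ≤ (d11 - D)^2 := by
    nlinarith [sq_abs (d11 - D), abs_nonneg (d11 - D), hd]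
  have h3 : eps^2 * S * eps^2 ≤ a1*b1*(d11-D)^2 :=
    mul_le_mul h1 h2 (by positivity) (by positivity)
  have h4 : 0 ≤ a1*b2*(d12-D)^2 := by positivity
  have h5 : 0 ≤ a2*b1*(d21-D)^2 := by positivity
  have h6 : 0 ≤ a2*b2*(d22-D)^2 := by positivity
  nlinarith [h3, h4, h5, h6]

/-- The Energy Boost Lemma. -/
theorem energy_boost {V : Type*} [Fintype V] (G : SimpleGraph V)
    (U W U' W' : Finset V) (ε : ℝ) (hε : 0 < ε)
    (hU' : U' ⊆ U) (hW' : W' ⊆ W)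
    (hcU : ε * U.card ≤ U'.card) (hcW : ε * W.card ≤ W'.card)
    (hirr : ε < |density G U' W' - density G U W|) :
    energy G U W + ε ^ 4 * (U.card : ℝ) * (W.card : ℝ) / (Fintype.card V : ℝ) ^ 2
      ≤ ∑ A ∈ P2 U' U, ∑ B ∈ P2 W' W, energy G A B := by
  have hU_ne : U.Nonempty := by
    by_contra h
    rw [Finset.not_nonempty_iff_eq_empty] at h
    subst h
    have hU'e : U' = ∅ := Finset.subset_empty.mp hU'
    rw [hU'e] at hirr
    simp [density, edgeCount] at hirr
    linarith
  have hW_ne : W.Nonempty := by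
    by_contra h
    rw [Finset.not_nonempty_iff_eq_empty] at h
    subst h
    have hW'e : W' = ∅ := Finset.subset_empty.mp hW'
    rw [hW'e] at hirr
    simp [density, edgeCount] at hirr
    linarith
  have hUpos : (0:ℝ) < U.card := by exact_mod_cast Finset.card_pos.mpr hU_ne
  have hWpos : (0:ℝ) < W.card := by exact_mod_cast Finset.card_pos.mpr hW_ne
  have ha1 : (0:ℝ) < U'.card := lt_of_lt_of_le (by positivity) hcU
  have hb1 : (0:ℝ) < W'.card := lt_of_lt_of_le (by positivity) hcW
  have hU'_ne : U'.Nonempty := Finset.card_pos.mp (by exact_mod_cast ha1)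
  have hW'_ne : W'.Nonempty := Finset.card_pos.mp (by exact_mod_cast hb1)
  have hnpos : (0:ℝ) < Fintype.card V := by
    obtain ⟨x, _⟩ := hU_ne
    have : Nonempty V := ⟨x⟩
    exact_mod_cast Fintype.card_pos
  have hn2 : (0:ℝ) < (Fintype.card V : ℝ)^2 := by positivity
  have hsum : ∑ A ∈ P2 U' U, ∑ B ∈ P2 W' W, energy G A B
      = (energy G U' W' + energy G U' (W \ W'))
        + (energy G (U \ U') W' + energy G (U \ U') (W \ W')) := by
    rw [P2_sum U' U _ hU' hU'_ne (by simp [energy_empty_left]),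
        P2_sum W' W _ hW' hW'_ne (energy_empty_right _ _),
        P2_sum W' W _ hW' hW'_ne (energy_empty_right _ _)]
  rw [hsum]
  have hacard : (U.card:ℝ) = (U'.card:ℝ) + ((U \ U').card:ℝ) := by
    have h := Finset.card_sdiff_add_card_eq_card hU'
    push_cast [← h]
    ring
  have hbcard : (W.card:ℝ) = (W'.card:ℝ) + ((W \ W').card:ℝ) := by
    have h := Finset.card_sdiff_add_card_eq_card hW'
    push_cast [← h]
    ring
  have hE : (edgeCount G U W : ℝ) = (edgeCount G U' W' : ℝ) + edgeCount G U' (W \ W')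
      + edgeCount G (U \ U') W' + edgeCount G (U \ U') (W \ W') := by
    have h1 : edgeCount G U W = edgeCount G U' W + edgeCount G (U \ U') W := by
      conv_lhs => rw [← Finset.union_sdiff_of_subset hU']
      exact edgeCount_union_left _ _ _ _ Finset.disjoint_sdiff
    have h2 : edgeCount G U' W = edgeCount G U' W' + edgeCount G U' (W \ W') := by
      conv_lhs => rw [← Finset.union_sdiff_of_subset hW']
      exact edgeCount_union_right _ _ _ _ Finset.disjoint_sdiff
    have h3 : edgeCount G (U \ U') W
        = edgeCount G (U \ U') W' + edgeCount G (U \ U') (W \ W') := by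
      conv_lhs => rw [← Finset.union_sdiff_of_subset hW']
      exact edgeCount_union_right _ _ _ _ Finset.disjoint_sdiff
    rw [h1, h2, h3]
    push_cast
    ring
  set a1 := (U'.card : ℝ)
  set a2 := ((U \ U').card : ℝ) with ha2def
  set b1 := (W'.card : ℝ)
  set b2 := ((W \ W').card : ℝ) with hb2def
  have ha2 : (0:ℝ) ≤ a2 := by positivity
  have hb2 : (0:ℝ) ≤ b2 := by positivity
  have hSpos : (0:ℝ) < (a1+a2)*(b1+b2) := by
    rw [← hacard, ← hbcard]; positivity
  have hdUW : density G U W = (edgeCount G U W : ℝ) / ((a1+a2)*(b1+b2)) := by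
    rw [density, hacard, hbcard]
  have hT : a1*b1*density G U' W' + a1*b2*density G U' (W \ W')
      + a2*b1*density G (U \ U') W' + a2*b2*density G (U \ U') (W \ W')
      = (edgeCount G U W : ℝ) := by
    rw [card_mul_density, card_mul_density, card_mul_density, card_mul_density]
    linarith [hE]
  have hkey := core a1 a2 b1 b2 (density G U' W') (density G U' (W \ W'))
      (density G (U \ U') W') (density G (U \ U') (W \ W')) ε (edgeCount G U W : ℝ)
      ha1 ha2 hb1 hb2 hε hT (by rw [← hacard]; exact hcU) (by rw [← hbcard]; exact hcW)
      (by rw [← hdUW]; exact hirr)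
  have hnum : (U.card:ℝ)*(W.card:ℝ)*(density G U W)^2 + ε^4*((U.card:ℝ)*(W.card:ℝ))
      ≤ a1*b1*(density G U' W')^2 + a1*b2*(density G U' (W \ W'))^2
        + a2*b1*(density G (U \ U') W')^2 + a2*b2*(density G (U \ U') (W \ W'))^2 := by
    have heq : (U.card:ℝ)*(W.card:ℝ)*(density G U W)^2
        = (edgeCount G U W : ℝ)^2/((a1+a2)*(b1+b2)) := by
      rw [hdUW, hacard, hbcard]
      field_simp
    rw [heq, hacard, hbcard]
    linarith [hkey]
  calc energy G U W + ε ^ 4 * (U.card : ℝ) * (W.card : ℝ) / (Fintype.card V : ℝ) ^ 2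
      = ((U.card:ℝ)*(W.card:ℝ)*(density G U W)^2 + ε^4*((U.card:ℝ)*(W.card:ℝ)))
          / (Fintype.card V : ℝ)^2 := by
        rw [energy]; ring
    _ ≤ (a1*b1*(density G U' W')^2 + a1*b2*(density G U' (W \ W'))^2
        + a2*b1*(density G (U \ U') W')^2 + a2*b2*(density G (U \ U') (W \ W'))^2)
          / (Fintype.card V : ℝ)^2 := by
        exact div_le_div_of_nonneg_right hnum hn2.le |>.trans_eq rfl
    _ = (energy G U' W' + energy G U' (W \ W'))
        + (energy G (U \ U') W' + energy G (U \ U') (W \ W')) := by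
        rw [energy, energy, energy, energy]; ring
end
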